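/- Let (X, Σ, μ) be a measure space, E ∈ Σ a non-atomic set with μ(E) > 0, and let Φ₁, Φ₂ be Young functions with Φ₂ ∈ Δ₂ such that Φ₂ is not weaker than Φ₁. Then there exists f ∈ L^{Φ₁}(X) such that the restriction of f to E does not belong to L^{Φ₂}(E). -/

import Mathlib

open MeasureTheory Filter Topology

/-- A Young function: continuous, convex, even, vanishing exactly at 0,
with superlinear growth at infinity. -/
structure YoungFunction where
  toFun : ℝ → ℝ
  continuous' : Continuous toFun
  convexOn' : ConvexOn ℝ Set.univ toFun
  even' : ∀ x, toFun (-x) = toFun x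
  zero_iff' : ∀ x, toFun x = 0 ↔ x = 0
  tendsto_atTop' : Tendsto (fun x => toFun x / x) atTop atTop

instance : CoeFun YoungFunction fun _ => ℝ → ℝ := ⟨YoungFunction.toFun⟩

variable {X : Type*} [MeasurableSpace X]

/-- Membership in the Orlicz space `L^Φ(μ)`. -/
def MemOrlicz (Φ : YoungFunction) (μ : Measure X) (f : X → ℝ) : Prop :=
  AEStronglyMeasurable f μ ∧ ∃ k > 0, Integrable (fun x => Φ (k * f x)) μ

/-- The Luxemburg norm on the Orlicz space `L^Φ(μ)`. -/
noncomputable def luxNorm (Φ : YoungFunction) (μ : Measure X) (f : X → ℝ) : ℝ :=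
  sInf {k : ℝ | 0 < k ∧ ∫ x, Φ (f x / k) ∂μ ≤ 1}

/-- The generalized (right) inverse of a Young function on `[0,∞)`. -/
noncomputable def yInv (Φ : YoungFunction) (y : ℝ) : ℝ :=
  sSup {x : ℝ | 0 ≤ x ∧ Φ x ≤ y}

/-- `Φ` satisfies the `Δ₂` condition globally. -/
def YoungDeltaTwo (Φ : YoungFunction) : Prop :=
  ∃ k > 0, ∀ x : ℝ, 0 ≤ x → Φ (2 * x) ≤ k * Φ x

/-- `Φ` satisfies the `Δ'` condition globally, with constant `c`. -/
def YoungDeltaPrime (Φ : YoungFunction) (c : ℝ) : Prop :=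
  0 < c ∧ ∀ x y : ℝ, 0 ≤ x → 0 ≤ y → Φ (x * y) ≤ c * Φ x * Φ y

/-- `Φ` satisfies the `∇'` condition globally, with constant `b`. -/
def YoungNablaPrime (Φ : YoungFunction) (b : ℝ) : Prop :=
  0 < b ∧ ∀ x y : ℝ, 0 ≤ x → 0 ≤ y → Φ x * Φ y ≤ Φ (b * x * y)

/-- `Φ ≺ Ψ` : `Φ` is weaker than `Ψ`. -/
def YoungWeaker (Φ Ψ : YoungFunction) : Prop :=
  ∃ a > 0, ∃ x₀ : ℝ, 0 ≤ x₀ ∧ ∀ x : ℝ, x₀ ≤ x → Φ x ≤ Ψ (a * x)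

/-- `A` is an atom of the measure `μ`. -/
def IsAtomSet (μ : Measure X) (A : Set X) : Prop :=
  MeasurableSet A ∧ 0 < μ A ∧
    ∀ B : Set X, MeasurableSet B → B ⊆ A → μ B = 0 ∨ μ B = μ A

/-- `μ` is non-atomic on the set `S`. -/
def NonAtomicOn (μ : Measure X) (S : Set X) : Prop :=
  ∀ A : Set X, A ⊆ S → ¬ IsAtomSet μ A

/-- A linear map between Orlicz spaces (given as a map on functions) is bounded. -/
def OrliczBounded (Φ₁ Φ₂ : YoungFunction) (μ : Measure X)
    (Tmap : (X → ℝ) → (X → ℝ)) : Prop :=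
  ∃ C > 0, ∀ f : X → ℝ, MemOrlicz Φ₁ μ f →
    MemOrlicz Φ₂ μ (Tmap f) ∧ luxNorm Φ₂ μ (Tmap f) ≤ C * luxNorm Φ₁ μ f

/-- The atomic decomposition of a σ-finite measure space: `X = (⋃ n, A n) ∪ B`
with the `A n` pairwise disjoint atoms of finite measure and `B` non-atomic. -/
def AtomicDecomposition (μ : Measure X) (A : ℕ → Set X) (B : Set X) : Prop :=
  (∀ n, IsAtomSet μ (A n)) ∧ (∀ n, μ (A n) < ⊤) ∧
    Pairwise (Function.onFun Disjoint A) ∧ (∀ n, Disjoint (A n) B) ∧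
    MeasurableSet B ∧ NonAtomicOn μ B ∧ (⋃ n, A n) ∪ B = Set.univ

open scoped ENNReal

/-! Since `Φ₂ ⊀ Φ₁`, there are points `xₙ ≥ 0` with `Φ₁((n+1)xₙ) < Φ₂(xₙ)` and `Φ₂(xₙ)` as large
as we like. By Sierpiński's theorem the non-atomic set `E` contains pairwise disjoint sets `gₙ`
of measure `wₙ = ((n+1)Φ₂(xₙ))⁻¹`, and we take `f = xₙ` on `gₙ`, `f = 0` elsewhere. Convexity
gives `(n+1)Φ₁(xₙ) ≤ Φ₁((n+1)xₙ)`, so `∫ Φ₁(f) ≤ ∑ (n+1)⁻²` is finite, whereas by `Δ₂` every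
`∫_E Φ₂(kf)` dominates a multiple of the harmonic series `∑ Φ₂(xₙ) wₙ = ∑ (n+1)⁻¹`. -/

namespace YoungFunction

variable (Φ : YoungFunction)

lemma map_zero : Φ 0 = 0 := (Φ.zero_iff' 0).2 rfl

lemma nonneg (x : ℝ) : 0 ≤ Φ x := by
  have h := Φ.convexOn'.2 (Set.mem_univ x) (Set.mem_univ (-x)) (by norm_num : (0 : ℝ) ≤ 1 / 2)
    (by norm_num : (0 : ℝ) ≤ 1 / 2) (by norm_num)
  simp only [smul_eq_mul, Φ.even'] at h
  rw [show (1 / 2 : ℝ) * x + 1 / 2 * -x = 0 by ring, Φ.map_zero] at h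
  linarith

lemma map_mul_le {t : ℝ} (ht₀ : 0 ≤ t) (ht₁ : t ≤ 1) (x : ℝ) : Φ (t * x) ≤ t * Φ x := by
  simpa [Φ.map_zero] using
    Φ.convexOn'.2 (Set.mem_univ x) (Set.mem_univ 0) ht₀ (sub_nonneg.2 ht₁) (add_sub_cancel t 1)

lemma mul_le_map_mul {c : ℝ} (hc : 1 ≤ c) (x : ℝ) : c * Φ x ≤ Φ (c * x) := by
  have hc₀ : 0 < c := one_pos.trans_le hc
  have h := Φ.map_mul_le (inv_nonneg.2 hc₀.le) (inv_le_one_of_one_le₀ hc) (c * x)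
  rw [inv_mul_cancel_left₀ hc₀.ne'] at h
  rwa [← le_inv_mul_iff₀ hc₀]

lemma monotoneOn : MonotoneOn Φ (Set.Ici 0) := by
  intro a (ha : 0 ≤ a) b (hb : 0 ≤ b) hab
  rcases eq_or_lt_of_le (le_trans ha hab) with hb₀ | hb₀
  · rw [le_antisymm (hab.trans hb₀.ge) ha, ← hb₀]
  calc Φ a = Φ (a / b * b) := by rw [div_mul_cancel₀ a hb₀.ne']
    _ ≤ a / b * Φ b := Φ.map_mul_le (div_nonneg ha hb₀.le) (div_le_one_of_le₀ hab hb₀.le) b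
    _ ≤ Φ b := mul_le_of_le_one_left (Φ.nonneg b) (div_le_one_of_le₀ hab hb₀.le)

lemma tendsto_atTop : Tendsto Φ atTop atTop := by
  refine (Φ.tendsto_atTop'.atTop_mul_atTop₀ tendsto_id).congr' ?_
  filter_upwards [eventually_ne_atTop 0] with x hx
  exact div_mul_cancel₀ _ hx

end YoungFunction

namespace YoungDeltaTwo

variable {Φ : YoungFunction}

lemma map_two_pow_mul_le (hΔ : YoungDeltaTwo Φ) : ∃ K, ∀ (m : ℕ) (x : ℝ), 0 ≤ x →
    Φ (2 ^ m * x) ≤ K ^ m * Φ x := by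
  obtain ⟨K, hK, hΔK⟩ := hΔ
  refine ⟨K, fun m => ?_⟩
  induction m with
  | zero => simp
  | succ m ih =>
    intro x hx
    calc Φ (2 ^ (m + 1) * x) = Φ (2 * (2 ^ m * x)) := by ring_nf
      _ ≤ K * Φ (2 ^ m * x) := hΔK _ (by positivity)
      _ ≤ K * (K ^ m * Φ x) := by gcongr; exact ih x hx
      _ = K ^ (m + 1) * Φ x := by ring

lemma exists_le_mul_map_mul (hΔ : YoungDeltaTwo Φ) {k : ℝ} (hk : 0 < k) :
    ∃ c, ∀ x, 0 ≤ x → Φ x ≤ c * Φ (k * x) := by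
  obtain ⟨K, hiter⟩ := hΔ.map_two_pow_mul_le
  obtain ⟨m, hm⟩ := pow_unbounded_of_one_lt k⁻¹ one_lt_two
  refine ⟨K ^ m, fun x hx => ?_⟩
  have hx_le : x ≤ 2 ^ m * (k * x) := by
    have : 1 < 2 ^ m * k := (inv_lt_iff_one_lt_mul₀ hk).1 hm
    nlinarith
  exact (Φ.monotoneOn hx (Set.mem_Ici.2 (by positivity)) hx_le).trans (hiter m _ (by positivity))

end YoungDeltaTwo

lemma YoungFunction.exists_seq_of_not_youngWeaker {Φ₁ Φ₂ : YoungFunction}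
    (hw : ¬ YoungWeaker Φ₂ Φ₁) (M : ℕ → ℝ) :
    ∃ x : ℕ → ℝ, ∀ n, 0 ≤ x n ∧ Φ₁ ((n + 1) * x n) < Φ₂ (x n) ∧ M n ≤ Φ₂ (x n) := by
  unfold YoungWeaker at hw
  push Not at hw
  have hseq : ∀ n : ℕ, ∃ x, 0 ≤ x ∧ Φ₁ ((n + 1) * x) < Φ₂ x ∧ M n ≤ Φ₂ x := by
    intro n
    obtain ⟨x₀, hx₀⟩ := ((Φ₂.tendsto_atTop.eventually_ge_atTop (M n)).and
      (eventually_ge_atTop 0)).exists_forall_of_atTop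
    obtain ⟨x, hx, hlt⟩ := hw (n + 1) (by positivity) (max x₀ 0) (le_max_right _ _)
    have hΦ₂x := hx₀ x ((le_max_left _ _).trans hx)
    exact ⟨x, hΦ₂x.2, hlt, hΦ₂x.1⟩
  choose x hx using hseq
  exact ⟨x, hx⟩

lemma MeasureTheory.Measure.exists_subset_le_forall_le_two_mul (μ : Measure X) (A : Set X)
    {r : ℝ≥0∞} (hr : r ≠ ⊤) : ∃ C ⊆ A, MeasurableSet C ∧ μ C ≤ r ∧
      ∀ D ⊆ A, MeasurableSet D → μ D ≤ r → μ D ≤ 2 * μ C := by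
  set S := μ '' {D | D ⊆ A ∧ MeasurableSet D ∧ μ D ≤ r}
  have hS_le : ∀ D ⊆ A, MeasurableSet D → μ D ≤ r → μ D ≤ sSup S :=
    fun D hDA hDm hDr => le_sSup ⟨D, ⟨hDA, hDm, hDr⟩, rfl⟩
  have hS_r : sSup S ≤ r := sSup_le (by rintro _ ⟨D, ⟨-, -, hDr⟩, rfl⟩; exact hDr)
  rcases eq_or_ne (sSup S) 0 with hS₀ | hS₀
  · refine ⟨∅, Set.empty_subset A, .empty, by simp, fun D hDA hDm hDr => ?_⟩
    simpa [hS₀] using hS_le D hDA hDm hDr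
  obtain ⟨_, ⟨C, ⟨hCA, hCm, hCr⟩, rfl⟩, hC⟩ :=
    lt_sSup_iff.1 (ENNReal.half_lt_self hS₀ (ne_top_of_le_ne_top hr hS_r))
  refine ⟨C, hCA, hCm, hCr, fun D hDA hDm hDr => ?_⟩
  calc μ D ≤ sSup S := hS_le D hDA hDm hDr
    _ = 2 * (sSup S / 2) := (ENNReal.mul_div_cancel (by norm_num) (by norm_num)).symm
    _ ≤ 2 * μ C := by gcongr

namespace NonAtomicOn

variable {μ : Measure X} {E A : Set X}

lemma exists_subset_pos_lt (hE : NonAtomicOn μ E) (hAE : A ⊆ E) (hA : MeasurableSet A)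
    (hA₀ : 0 < μ A) : ∃ B ⊆ A, MeasurableSet B ∧ 0 < μ B ∧ μ B < μ A := by
  have h := hE A hAE
  simp only [IsAtomSet, not_and, not_forall, not_or] at h
  obtain ⟨B, hBm, hBA, hB₀, hBA'⟩ := h hA hA₀
  exact ⟨B, hBA, hBm, pos_iff_ne_zero.2 hB₀, (measure_mono hBA).lt_of_ne hBA'⟩

lemma exists_subset_pos_two_mul_le (hE : NonAtomicOn μ E) (hAE : A ⊆ E) (hA : MeasurableSet A)
    (hA₀ : 0 < μ A) : ∃ B ⊆ A, MeasurableSet B ∧ 0 < μ B ∧ 2 * μ B ≤ μ A := by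
  obtain ⟨B, hBA, hBm, hB₀, hBA'⟩ := hE.exists_subset_pos_lt hAE hA hA₀
  have hsum : μ B + μ (A \ B) = μ A := by
    rw [measure_add_sdiff hBm.nullMeasurableSet, Set.union_eq_self_of_subset_left hBA]
  rcases le_total (μ B) (μ (A \ B)) with h | h
  · exact ⟨B, hBA, hBm, hB₀, by rw [two_mul, ← hsum]; gcongr⟩
  · refine ⟨A \ B, Set.sdiff_subset, hA.diff hBm, pos_iff_ne_zero.2 fun h₀ => ?_, ?_⟩
    · rw [h₀, add_zero] at hsum
      exact hBA'.ne hsum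
    · rw [two_mul, ← hsum]; gcongr

lemma exists_subset_pos_le (hE : NonAtomicOn μ E) (hAE : A ⊆ E) (hA : MeasurableSet A)
    (hA₀ : 0 < μ A) {ε : ℝ≥0∞} (hε : ε ≠ 0) : ∃ B ⊆ A, MeasurableSet B ∧ 0 < μ B ∧ μ B ≤ ε := by
  obtain ⟨A', hA'A, hA'm, hA'₀, hA'⟩ : ∃ A' ⊆ A, MeasurableSet A' ∧ 0 < μ A' ∧ μ A' ≠ ⊤ := by
    obtain ⟨B, hBA, hBm, hB₀, hB⟩ := hE.exists_subset_pos_lt hAE hA hA₀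
    exact ⟨B, hBA, hBm, hB₀, hB.ne_top⟩
  have hA'E := hA'A.trans hAE
  have hiter : ∀ k : ℕ, ∃ B ⊆ A', MeasurableSet B ∧ 0 < μ B ∧ μ B ≤ 2⁻¹ ^ k * μ A' := by
    intro k
    induction k with
    | zero => exact ⟨A', subset_rfl, hA'm, hA'₀, by simp⟩
    | succ k ih =>
      obtain ⟨B, hBA', hBm, hB₀, hB⟩ := ih
      obtain ⟨C, hCB, hCm, hC₀, hC⟩ :=
        hE.exists_subset_pos_two_mul_le (hBA'.trans hA'E) hBm hB₀
      refine ⟨C, hCB.trans hBA', hCm, hC₀, ?_⟩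
      calc μ C = 2⁻¹ * (2 * μ C) := by
            rw [← mul_assoc, ENNReal.inv_mul_cancel two_ne_zero ENNReal.ofNat_ne_top, one_mul]
        _ ≤ 2⁻¹ * μ B := by gcongr
        _ ≤ 2⁻¹ * (2⁻¹ ^ k * μ A') := by gcongr
        _ = 2⁻¹ ^ (k + 1) * μ A' := by ring
  have hlim : Tendsto (fun k : ℕ => 2⁻¹ ^ k * μ A') atTop (𝓝 0) := by
    simpa using ENNReal.Tendsto.mul_const (ENNReal.tendsto_pow_atTop_nhds_zero_of_lt_one
      ENNReal.one_half_lt_one) (Or.inr hA')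
  obtain ⟨k, hk⟩ := (hlim.eventually (gt_mem_nhds (pos_iff_ne_zero.2 hε))).exists
  obtain ⟨B, hBA', hBm, hB₀, hB⟩ := hiter k
  exact ⟨B, hBA'.trans hA'A, hBm, hB₀, hB.trans hk.le⟩

theorem exists_subset_measure_eq (hE : NonAtomicOn μ E) (hAE : A ⊆ E) (hA : MeasurableSet A)
    {t : ℝ≥0∞} (ht : t ≤ μ A) (htop : t ≠ ⊤) : ∃ B ⊆ A, MeasurableSet B ∧ μ B = t := by
  -- greedy exhaustion: `C B` takes at least half of what may still be added to `B`
  choose C hCA hCm hCle hCmax using fun B : Set X =>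
    μ.exists_subset_le_forall_le_two_mul (A \ B) (r := t - μ B)
      (ne_top_of_le_ne_top htop tsub_le_self)
  let B : ℕ → Set X := fun n => Nat.rec ∅ (fun _ B => B ∪ C B) n
  have hB : ∀ n, B n ⊆ A ∧ MeasurableSet (B n) ∧ μ (B n) = ∑ k ∈ Finset.range n, μ (C (B k)) ∧
      μ (B n) ≤ t := by
    intro n
    induction n with
    | zero => simp [B]
    | succ n ih =>
      obtain ⟨hBA, hBm, hBμ, hBt⟩ := ih
      have hμ : μ (B (n + 1)) = μ (B n) + μ (C (B n)) :=
        measure_union (Set.disjoint_sdiff_right.mono_right (hCA (B n))) (hCm (B n))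
      refine ⟨Set.union_subset hBA ((hCA _).trans Set.sdiff_subset), hBm.union (hCm _), ?_, ?_⟩
      · rw [hμ, hBμ, Finset.sum_range_succ]
      · rw [hμ]
        calc μ (B n) + μ (C (B n)) ≤ μ (B n) + (t - μ (B n)) := by gcongr; exact hCle _
          _ = t := add_tsub_cancel_of_le hBt
  have hmono : Monotone B := monotone_nat_of_le_succ fun n => Set.subset_union_left
  have hBt : μ (⋃ n, B n) ≤ t := by
    rw [hmono.measure_iUnion]
    exact iSup_le fun n => (hB n).2.2.2
  refine ⟨⋃ n, B n, Set.iUnion_subset fun n => (hB n).1, .iUnion fun n => (hB n).2.1,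
    le_antisymm hBt (not_lt.1 fun hlt => ?_)⟩
  -- a piece of `A \ ⋃ n, B n` fitting under `t` is admissible at every stage, yet `μ (C (B n)) → 0`
  obtain ⟨D, hD, hDm, hD₀, hDt⟩ := hE.exists_subset_pos_le (Set.sdiff_subset.trans hAE)
    (hA.diff (.iUnion fun n => (hB n).2.1))
    ((tsub_pos_of_lt (hlt.trans_le ht)).trans_le le_measure_sdiff) (tsub_pos_of_lt hlt).ne'
  have hC₀ : Tendsto (fun n => μ (C (B n))) atTop (𝓝 0) :=
    ENNReal.tendsto_atTop_zero_of_tsum_ne_top <| ne_top_of_le_ne_top htop <|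
      ENNReal.tsum_le_of_sum_range_le fun n => (hB n).2.2.1 ▸ (hB n).2.2.2
  have hD_le : ∀ n, μ D ≤ 2 * μ (C (B n)) := fun n =>
    hCmax (B n) D (hD.trans (Set.sdiff_subset_sdiff_right (Set.subset_iUnion B n))) hDm
      (hDt.trans (tsub_le_tsub_left (measure_mono (Set.subset_iUnion B n)) t))
  have : μ D ≤ 0 := by
    simpa using ge_of_tendsto' (ENNReal.Tendsto.const_mul hC₀ (Or.inr ENNReal.ofNat_ne_top)) hD_le
  exact hD₀.ne' (le_zero_iff.1 this)

theorem exists_pairwise_disjoint_measure_eq (hE : NonAtomicOn μ E) (hAE : A ⊆ E)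
    (hA : MeasurableSet A) (t : ℕ → ℝ≥0∞) (ht : ∑' n, t n ≤ μ A) (htop : ∑' n, t n ≠ ⊤) :
    ∃ g : ℕ → Set X, (∀ n, g n ⊆ A) ∧ (∀ n, MeasurableSet (g n)) ∧
      Pairwise (Function.onFun Disjoint g) ∧ ∀ n, μ (g n) = t n := by
  have hstep : ∀ (n : ℕ) (W : Set X), MeasurableSet W → μ W = ∑ k ∈ Finset.range n, t k →
      ∃ C ⊆ A \ W, MeasurableSet C ∧ μ C = t n := by
    intro n W hWm hW
    have hW_top : μ W ≠ ⊤ := hW ▸ ne_top_of_le_ne_top htop (ENNReal.sum_le_tsum _)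
    refine hE.exists_subset_measure_eq (Set.sdiff_subset.trans hAE) (hA.diff hWm)
      ((ENNReal.le_sub_of_add_le_right hW_top ?_).trans le_measure_sdiff)
      (ne_top_of_le_ne_top htop (ENNReal.le_tsum n))
    rw [hW, add_comm, ← Finset.sum_range_succ]
    exact (ENNReal.sum_le_tsum _).trans ht
  choose! C hCA hCm hCμ using hstep
  let W : ℕ → Set X := fun n => Nat.rec ∅ (fun n W => W ∪ C n W) n
  have hW : ∀ n, MeasurableSet (W n) ∧ μ (W n) = ∑ k ∈ Finset.range n, t k := by
    intro n
    induction n with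
    | zero => simp [W]
    | succ n ih =>
      refine ⟨ih.1.union (hCm n _ ih.1 ih.2), ?_⟩
      rw [Finset.sum_range_succ, ← ih.2, ← hCμ n _ ih.1 ih.2]
      exact measure_union (Set.disjoint_sdiff_right.mono_right (hCA n _ ih.1 ih.2))
        (hCm n _ ih.1 ih.2)
  have hmono : Monotone W := monotone_nat_of_le_succ fun n => Set.subset_union_left
  refine ⟨fun n => C n (W n), fun n => (hCA n _ (hW n).1 (hW n).2).trans Set.sdiff_subset,
    fun n => hCm n _ (hW n).1 (hW n).2, (pairwise_disjoint_on _).2 fun m n hmn => ?_,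
    fun n => hCμ n _ (hW n).1 (hW n).2⟩
  have hCm_W : C m (W m) ⊆ W n := Set.subset_union_right.trans (hmono (Nat.succ_le_of_lt hmn))
  exact (Set.disjoint_sdiff_right.mono_right (hCA n _ (hW n).1 (hW n).2)).mono_left hCm_W

end NonAtomicOn

lemma ENNReal.tsum_ofReal_ne_top_iff_summable {ι : Type*} {f : ι → ℝ} (hf : ∀ i, 0 ≤ f i) :
    ∑' i, ENNReal.ofReal (f i) ≠ ⊤ ↔ Summable f := by
  lift f to ι → NNReal using hf
  simp only [ENNReal.ofReal_coe_nnreal, ENNReal.tsum_coe_ne_top_iff_summable, NNReal.summable_coe]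

lemma tsum_indicator_const_apply_of_mem {α ι M : Type*} {g : ι → Set α} [AddCommMonoid M]
    [TopologicalSpace M] (hg : Pairwise (Function.onFun Disjoint g)) (c : ι → M) {n : ι} {a : α}
    (ha : a ∈ g n) :
    ∑' m, (g m).indicator (fun _ => c m) a = c n :=
  (tsum_eq_single n fun _ hm => Set.indicator_of_notMem
    (Set.disjoint_left.1 (hg hm.symm) ha) _).trans (Set.indicator_of_mem ha _)

lemma map_tsum_indicator_const_apply {α ι M N : Type*} {g : ι → Set α} [AddCommMonoid M]
    [TopologicalSpace M] [AddCommMonoid N] [TopologicalSpace N]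
    (hg : Pairwise (Function.onFun Disjoint g))
    {Ψ : M → N} (hΨ : Ψ 0 = 0) (c : ι → M) (a : α) :
    Ψ (∑' m, (g m).indicator (fun _ => c m) a) = ∑' m, (g m).indicator (fun _ => Ψ (c m)) a := by
  by_cases ha : ∃ n, a ∈ g n
  · obtain ⟨n, hn⟩ := ha
    rw [tsum_indicator_const_apply_of_mem hg _ hn, tsum_indicator_const_apply_of_mem hg _ hn]
  · push Not at ha
    simp [Set.indicator_of_notMem (ha _), hΨ]

theorem memOrlicz_tsum_indicator_iff {ι : Type*} [Countable ι] {g : ι → Set X}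
    {Φ : YoungFunction} {ν : Measure X} (hgm : ∀ n, MeasurableSet (g n))
    (hg : Pairwise (Function.onFun Disjoint g))
    {w : ι → ℝ} (hw : ∀ n, 0 ≤ w n) (hgν : ∀ n, ν (g n) = ENNReal.ofReal (w n)) (x : ι → ℝ) :
    MemOrlicz Φ ν (fun a => ∑' n, (g n).indicator (fun _ => x n) a) ↔
      ∃ k > 0, Summable fun n => Φ (k * x n) * w n := by
  have hmeas : Measurable fun a => ∑' n, (g n).indicator (fun _ => x n) a :=
    Measurable.tsum fun n => measurable_const.indicator (hgm n)
  refine (and_iff_right hmeas.aestronglyMeasurable).trans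
    (exists_congr fun k => and_congr_right fun _ => ?_)
  have hlintegral : ∫⁻ a, ENNReal.ofReal (Φ (k * ∑' n, (g n).indicator (fun _ => x n) a)) ∂ν =
      ∑' n, ENNReal.ofReal (Φ (k * x n) * w n) := by
    simp_rw [map_tsum_indicator_const_apply hg (Ψ := fun y => ENNReal.ofReal (Φ (k * y)))
      (by simp [Φ.map_zero])]
    rw [lintegral_tsum fun n => (measurable_const.indicator (hgm n)).aemeasurable]
    refine tsum_congr fun n => ?_
    rw [lintegral_indicator_const (hgm n), hgν, ENNReal.ofReal_mul (Φ.nonneg _)]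
  have hmeasΦ : Measurable fun a => Φ (k * ∑' n, (g n).indicator (fun _ => x n) a) :=
    Φ.continuous'.measurable.comp (hmeas.const_mul k)
  rw [← lintegral_ofReal_ne_top_iff_integrable hmeasΦ.aestronglyMeasurable
    (ae_of_all _ fun _ => Φ.nonneg _), hlintegral,
    ENNReal.tsum_ofReal_ne_top_iff_summable fun n => mul_nonneg (Φ.nonneg _) (hw n)]

lemma YoungFunction.summable_map_mul_inv_of_map_succ_mul_le {Φ₁ Φ₂ : YoungFunction} {x : ℕ → ℝ}
    (hx : ∀ n : ℕ, Φ₁ ((n + 1) * x n) ≤ Φ₂ (x n)) (hpos : ∀ n, 0 < Φ₂ (x n)) :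
    Summable fun n : ℕ => Φ₁ (x n) * ((n + 1) * Φ₂ (x n))⁻¹ := by
  have hsq : Summable fun n : ℕ => (((n + 1 : ℕ) : ℝ) ^ 2)⁻¹ :=
    (summable_nat_add_iff 1).2 (Real.summable_nat_pow_inv.2 one_lt_two)
  refine hsq.of_nonneg_of_le (fun n => mul_nonneg (Φ₁.nonneg _) (by positivity [hpos n]))
    fun n => ?_
  have hΦ₁ : (n + 1) * Φ₁ (x n) ≤ Φ₂ (x n) :=
    (Φ₁.mul_le_map_mul (by linarith) _).trans (hx n)
  rw [← div_eq_mul_inv, div_le_iff₀ (by positivity [hpos n])]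
  calc Φ₁ (x n) = ((n + 1) * Φ₁ (x n)) / (n + 1) := by field_simp
    _ ≤ Φ₂ (x n) / (n + 1) := by gcongr
    _ = (((n + 1 : ℕ) : ℝ) ^ 2)⁻¹ * ((n + 1) * Φ₂ (x n)) := by push_cast; field_simp

lemma YoungDeltaTwo.not_summable_map_mul_mul_inv {Φ : YoungFunction} (hΔ : YoungDeltaTwo Φ)
    {k : ℝ} (hk : 0 < k) {x : ℕ → ℝ} (hx : ∀ n, 0 ≤ x n) (hpos : ∀ n, 0 < Φ (x n)) :
    ¬ Summable fun n : ℕ => Φ (k * x n) * ((n + 1) * Φ (x n))⁻¹ := by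
  obtain ⟨c, hcΦ⟩ := hΔ.exists_le_mul_map_mul hk
  intro hsum
  refine Real.not_summable_natCast_inv ((summable_nat_add_iff 1).1 ?_)
  refine (hsum.mul_left c).of_nonneg_of_le (fun n => by positivity) fun n => ?_
  rw [← mul_assoc, ← div_eq_mul_inv, le_div_iff₀ (by positivity [hpos n])]
  calc ((n + 1 : ℕ) : ℝ)⁻¹ * ((n + 1) * Φ (x n)) = Φ (x n) := by push_cast; field_simp
    _ ≤ c * Φ (k * x n) := hcΦ _ (hx n)

lemma tsum_ofReal_le_of_le_geometric_two {w : ℕ → ℝ} {m : ℝ} (hw₀ : ∀ n, 0 ≤ w n)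
    (hw : ∀ n, w n ≤ m / 2 / 2 ^ n) : ∑' n, ENNReal.ofReal (w n) ≤ ENNReal.ofReal m := by
  calc ∑' n, ENNReal.ofReal (w n) ≤ ∑' n : ℕ, ENNReal.ofReal (m / 2 / 2 ^ n) :=
        ENNReal.tsum_le_tsum fun n => ENNReal.ofReal_le_ofReal (hw n)
    _ = ENNReal.ofReal m := by
      rw [← ENNReal.ofReal_tsum_of_nonneg (fun n => (hw₀ n).trans (hw n))
        (summable_geometric_two' m), tsum_geometric_two']

/-- on a non-atomic set `E` of positive measure, if `Φ₂ ⊀ Φ₁`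
then there is `f ∈ L^{Φ₁}(X)` whose restriction to `E` is not in `L^{Φ₂}(E)`. -/
theorem exists_memOrlicz_not_memOrlicz_restrict
    {X : Type*} [MeasurableSpace X] (μ : Measure X)
    (E : Set X) (hE : MeasurableSet E) (hEna : NonAtomicOn μ E) (hEpos : 0 < μ E)
    (Φ₁ Φ₂ : YoungFunction) (hΔ : YoungDeltaTwo Φ₂) (hw : ¬ YoungWeaker Φ₂ Φ₁) :
    ∃ f : X → ℝ, MemOrlicz Φ₁ μ f ∧ ¬ MemOrlicz Φ₂ (μ.restrict E) f := by
  obtain ⟨m, -, hm₀, hmE⟩ := ENNReal.lt_iff_exists_real_btwn.1 hEpos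
  have hm : 0 < m := ENNReal.ofReal_pos.1 hm₀
  obtain ⟨x, hx⟩ := YoungFunction.exists_seq_of_not_youngWeaker hw fun n => 2 / m * 2 ^ n
  have hpos : ∀ n, 0 < Φ₂ (x n) := fun n => lt_of_lt_of_le (by positivity) (hx n).2.2
  set w : ℕ → ℝ := fun n => ((n + 1) * Φ₂ (x n))⁻¹
  have hw₀ : ∀ n, 0 ≤ w n := fun n => by positivity [hpos n]
  -- the weights are dominated by a geometric series of sum `m`, so they fit into `E`
  have hw_le : ∀ n, w n ≤ m / 2 / 2 ^ n := fun n => calc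
    w n ≤ (Φ₂ (x n))⁻¹ := inv_anti₀ (hpos n) (le_mul_of_one_le_left (hpos n).le (by simp))
    _ ≤ (2 / m * 2 ^ n)⁻¹ := inv_anti₀ (by positivity) (hx n).2.2
    _ = m / 2 / 2 ^ n := by field_simp
  have hw_m := tsum_ofReal_le_of_le_geometric_two hw₀ hw_le
  obtain ⟨g, hgE, hgm, hg, hgμ⟩ := hEna.exists_pairwise_disjoint_measure_eq subset_rfl hE _
    (hw_m.trans hmE.le) (ne_top_of_le_ne_top ENNReal.ofReal_ne_top hw_m)
  refine ⟨fun a => ∑' n, (g n).indicator (fun _ => x n) a, ?_, ?_⟩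
  · rw [memOrlicz_tsum_indicator_iff hgm hg hw₀ hgμ]
    exact ⟨1, one_pos, by simpa only [one_mul] using
      YoungFunction.summable_map_mul_inv_of_map_succ_mul_le (fun n => (hx n).2.1.le) hpos⟩
  · rw [memOrlicz_tsum_indicator_iff hgm hg hw₀ fun n =>
      (μ.restrict_eq_self (hgE n)).trans (hgμ n)]
    rintro ⟨k, hk, hsum⟩
    exact hΔ.not_summable_map_mul_mul_inv hk (fun n => (hx n).1) hpos hsum
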